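/- Let a ∈ ℂ with |a| < 1 and β ∈ ℝ, let M(z) = e^{iβ}·(z − a)/(1 − conj(a)·z), and let η : ℝ → ℝ be a continuous function with e^{iη(t)} = M(e^{it}) for all t ∈ ℝ. Then for every z in the open unit disk and all θ, θ′ ∈ ℝ with θ < θ′ ≤ θ + 2π: ∫_{η(θ)}^{η(θ′)} P(M(z), t) dt = ∫_{θ}^{θ′} P(z, t) dt. (Conformal invariance of the harmonic measure of a boundary arc under an automorphism of the disk.) -/

import Mathlib

/-! With `B_z(x) = (x - z) / (1 - z̄ x)`, the function `blaschkeArg z t = t + 2 arg (1 - z e^{-it})`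
is a continuous argument of `B_z(e^{it})` (the point `1 - z e^{-it}` stays in the right half-plane)
and its `t`-derivative is `2π P(z,t)`. Hence the harmonic measure of an arc is the increase of this
argument along the arc, divided by `2π`. Since `B_{M z} ∘ M = c · B_z` for a unimodular constant `c`,
the difference `blaschkeArg (M z) (η t) - blaschkeArg z t` is a continuous real function whose
exponential `e^{i·}` is constant, so it is constant. -/

/-- The Poisson kernel of the unit disk:
`P(z,θ) = (1/(2π)) · (1 − |z|²)/|z − e^{iθ}|²`. -/
noncomputable def poisson (z : ℂ) (θ : ℝ) : ℝ :=
  (1 / (2 * Real.pi)) * (1 - ‖z‖ ^ 2) /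
    ‖z - Complex.exp (θ * Complex.I)‖ ^ 2

open Complex ComplexConjugate

noncomputable def blaschkeFactor (a z : ℂ) : ℂ := (z - a) / (1 - conj a * z)

noncomputable def diskAutomorphism (β : ℝ) (a z : ℂ) : ℂ := cexp (β * I) * blaschkeFactor a z

noncomputable def blaschkeArg (z : ℂ) (t : ℝ) : ℝ := t + 2 * arg (1 - z * cexp (-(t * I)))

lemma one_sub_mul_mem_slitPlane {z w : ℂ} (hz : ‖z‖ < 1) (hw : ‖w‖ ≤ 1) :
    1 - z * w ∈ slitPlane := by
  have : ‖z * w‖ < 1 := by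
    rw [norm_mul]; nlinarith [norm_nonneg z, norm_nonneg w]
  have := (re_le_norm (z * w)).trans_lt this
  exact Or.inl (by rw [sub_re, one_re]; linarith)

lemma one_sub_mul_ne_zero {z w : ℂ} (hz : ‖z‖ < 1) (hw : ‖w‖ ≤ 1) : 1 - z * w ≠ 0 :=
  slitPlane_ne_zero (one_sub_mul_mem_slitPlane hz hw)

lemma normSq_one_sub_conj_mul_sub_normSq_sub (a z : ℂ) :
    normSq (1 - conj a * z) - normSq (z - a) = (1 - normSq a) * (1 - normSq z) := by
  simp only [normSq_apply, mul_re, mul_im, sub_re, sub_im, one_re, one_im, conj_re, conj_im]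
  ring

lemma norm_blaschkeFactor_lt_one {a z : ℂ} (ha : ‖a‖ < 1) (hz : ‖z‖ < 1) :
    ‖blaschkeFactor a z‖ < 1 := by
  have hd : 1 - conj a * z ≠ 0 := one_sub_mul_ne_zero (by rwa [norm_conj]) hz.le
  rw [blaschkeFactor, norm_div, div_lt_one (norm_pos_iff.mpr hd), ← sq_lt_sq₀ (norm_nonneg _)
    (norm_nonneg _), ← normSq_eq_norm_sq, ← normSq_eq_norm_sq, ← sub_pos,
    normSq_one_sub_conj_mul_sub_normSq_sub, normSq_eq_norm_sq, normSq_eq_norm_sq]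
  apply mul_pos <;> nlinarith [norm_nonneg a, norm_nonneg z]

lemma norm_diskAutomorphism_lt_one (β : ℝ) {a z : ℂ} (ha : ‖a‖ < 1) (hz : ‖z‖ < 1) :
    ‖diskAutomorphism β a z‖ < 1 := by
  rw [diskAutomorphism, norm_mul, norm_exp_ofReal_mul_I, one_mul]
  exact norm_blaschkeFactor_lt_one ha hz

lemma blaschkeFactor_diskAutomorphism (β : ℝ) {a z x : ℂ} (hz : 1 - conj a * z ≠ 0)
    (hx : 1 - conj a * x ≠ 0) (hzx : 1 - conj z * x ≠ 0) (ha : 1 - conj a * a ≠ 0) :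
    blaschkeFactor (diskAutomorphism β a z) (diskAutomorphism β a x)
      = cexp (β * I) * conj (1 - conj a * z) / (1 - conj a * z) * blaschkeFactor z x := by
  have hu : conj (cexp (β * I)) * cexp (β * I) = 1 := by
    rw [← exp_conj, ← exp_add]; simp
  have hz' : conj (1 - conj a * z) ≠ 0 := (map_ne_zero _).mpr hz
  simp only [blaschkeFactor, diskAutomorphism, map_mul, map_div₀, map_sub, map_one,
    conj_conj] at hz' ⊢
  generalize cexp (β * I) = u at hu ⊢
  generalize conj u = v at hu ⊢
  have hx' : 1 - x * conj a ≠ 0 := by rwa [mul_comm]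
  have hzx' : 1 - x * conj z ≠ 0 := by rwa [mul_comm]
  field_simp
  have num : (x - a) * (1 - conj a * z) - (1 - x * conj a) * (z - a)
      = (1 - conj a * a) * (x - z) := by ring
  have den : (1 - x * conj a) * (1 - a * conj z) - u * (x - a) * v * (conj z - conj a)
      = (1 - conj a * a) * (1 - x * conj z) := by
    linear_combination -(x - a) * (conj z - conj a) * hu
  rw [num, den]
  field_simp

lemma re_add_div_sub (a b : ℂ) : ((a + b) / (a - b)).re = (‖a‖ ^ 2 - ‖b‖ ^ 2) / ‖a - b‖ ^ 2 := by
  simpa [poissonKernel, herglotzRieszKernel] using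
    (congrFun (poissonKernel_eq_re_herglotzRieszKernel (c := 0) (w := b)) a).symm

lemma poisson_eq_re (z : ℂ) (t : ℝ) :
    poisson z t = ((cexp (t * I) + z) / (cexp (t * I) - z)).re / (2 * Real.pi) := by
  rw [re_add_div_sub, norm_exp_ofReal_mul_I, norm_sub_rev, poisson]
  ring

lemma cexp_ofReal_mul_I_sub_ne_zero {z : ℂ} (hz : ‖z‖ < 1) (t : ℝ) : cexp (t * I) - z ≠ 0 :=
  fun h => by simp [← sub_eq_zero.mp h] at hz

lemma continuous_poisson {z : ℂ} (hz : ‖z‖ < 1) : Continuous (poisson z) := by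
  simp_rw [funext (poisson_eq_re z)]
  fun_prop (disch := exact fun t => cexp_ofReal_mul_I_sub_ne_zero hz t)

lemma hasDerivAt_blaschkeArg {z : ℂ} (hz : ‖z‖ < 1) (t : ℝ) :
    HasDerivAt (blaschkeArg z) (2 * Real.pi * poisson z t) t := by
  have hmem := one_sub_mul_mem_slitPlane hz (norm_exp_ofReal_mul_I (-t)).le
  have hF : HasDerivAt (fun s : ℂ => s * I + 2 * log (1 - z * cexp (-(s * I))))
      (I + 2 * (z * I * cexp (-(t * I)) / (1 - z * cexp (-(t * I))))) t := by
    have := (((hasDerivAt_id (t : ℂ)).mul_const I).neg.cexp.const_mul z).const_sub 1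
    refine ((hasDerivAt_id (t : ℂ)).mul_const I).add ((this.clog ?_).const_mul 2) |>.congr_deriv ?_
    · simpa using hmem
    · simp; ring
  have hG : blaschkeArg z = fun s : ℝ => ((s : ℂ) * I + 2 * log (1 - z * cexp (-(s * I)))).im := by
    ext s; simp [blaschkeArg, log_im]
  rw [hG]
  refine (imCLM.hasFDerivAt.comp_hasDerivAt t hF.comp_ofReal).congr_deriv ?_
  have key : I + 2 * (z * I * cexp (-(t * I)) / (1 - z * cexp (-(t * I))))
      = I * ((cexp (t * I) + z) / (cexp (t * I) - z)) := by
    have he := cexp_ofReal_mul_I_sub_ne_zero hz t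
    have he0 := exp_ne_zero (t * I)
    rw [exp_neg]
    generalize cexp (t * I) = e at he he0 ⊢
    field_simp
    ring
  rw [imCLM_apply, key, I_mul_im, poisson_eq_re]
  field_simp

lemma cexp_two_mul_arg_mul_I {u : ℂ} (hu : u ≠ 0) : cexp (2 * arg u * I) = u / conj u := by
  have hn : (‖u‖ : ℂ) ≠ 0 := by exact_mod_cast norm_ne_zero_iff.mpr hu
  have hc : conj u ≠ 0 := (map_ne_zero _).mpr hu
  have h : cexp (arg u * I) = u / ‖u‖ := by
    rw [eq_div_iff hn, mul_comm, norm_mul_exp_arg_mul_I]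
  rw [show 2 * (arg u : ℂ) * I = arg u * I + arg u * I by ring, exp_add, h, ← sq, div_pow,
    ← mul_conj' u]
  field_simp

lemma cexp_blaschkeArg_mul_I {z : ℂ} (hz : ‖z‖ < 1) (t : ℝ) :
    cexp (blaschkeArg z t * I) = blaschkeFactor z (cexp (t * I)) := by
  have hv := one_sub_mul_ne_zero hz (norm_exp_ofReal_mul_I (-t)).le
  have he : cexp (t * I) * cexp (-(t * I)) = 1 := by rw [← exp_add]; simp
  have hce : conj (cexp (-(t * I))) = cexp (t * I) := by rw [← exp_conj]; simp
  rw [ofReal_neg, neg_mul] at hv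
  rw [blaschkeArg, ofReal_add, add_mul, exp_add, ofReal_mul, ofReal_ofNat, cexp_two_mul_arg_mul_I hv,
    blaschkeFactor]
  simp only [map_sub, map_one, map_mul, hce, ← mul_div_assoc]
  congr 1
  linear_combination -z * he

lemma continuous_blaschkeArg {z : ℂ} (hz : ‖z‖ < 1) : Continuous (blaschkeArg z) :=
  continuous_iff_continuousAt.2 fun t => (hasDerivAt_blaschkeArg hz t).continuousAt

lemma integral_poisson {z : ℂ} (hz : ‖z‖ < 1) (θ θ' : ℝ) :
    ∫ t in θ..θ', poisson z t = (blaschkeArg z θ' - blaschkeArg z θ) / (2 * Real.pi) := by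
  rw [eq_div_iff Real.two_pi_pos.ne', mul_comm, ← intervalIntegral.integral_const_mul]
  exact intervalIntegral.integral_eq_sub_of_hasDerivAt (fun t _ => hasDerivAt_blaschkeArg hz t)
    (((continuous_poisson hz).const_mul _).intervalIntegrable _ _)

lemma sub_eq_sub_of_cexp_mul_I_eq_mul {X : Type*} [TopologicalSpace X] [PreconnectedSpace X]
    {f g : X → ℝ} (hf : Continuous f) (hg : Continuous g) {c : ℂ}
    (h : ∀ x, cexp (f x * I) = c * cexp (g x * I)) (x y : X) : f x - g x = f y - g y := by
  refine Circle.isCoveringMap_exp.const_of_comp (hf.sub hg) (fun x y => Circle.ext ?_) x y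
  have hc : ∀ x, cexp ((f x - g x : ℝ) * I) = c := fun x => by
    rw [ofReal_sub, sub_mul, exp_sub, h, mul_div_cancel_right₀ _ (exp_ne_zero _)]
  simp only [Circle.coe_exp, Pi.sub_apply, hc]

/-- **Conformal invariance of harmonic measure under disk automorphisms.**
Let `M(z) = e^{iβ}·(z − a)/(1 − conj(a)·z)` with `|a| < 1`, `β ∈ ℝ`, and let
`η : ℝ → ℝ` be a continuous lift of the induced boundary circle map, i.e.
`e^{iη(t)} = M(e^{it})` for all `t`.  Then for every `z` in the open unit disk and all
`θ < θ′ ≤ θ + 2π`, `∫_{η(θ)}^{η(θ′)} P(M(z),t) dt = ∫_θ^{θ′} P(z,t) dt`. -/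
theorem harmonic_measure_conformal_invariance
    (a : ℂ) (ha : ‖a‖ < 1) (β : ℝ)
    (M : ℂ → ℂ)
    (hM : ∀ z : ℂ, M z = Complex.exp (β * Complex.I) * (z - a) / (1 - (starRingEnd ℂ) a * z))
    (η : ℝ → ℝ) (hη : Continuous η)
    (hlift : ∀ t : ℝ, Complex.exp ((η t : ℂ) * Complex.I) = M (Complex.exp (t * Complex.I))) :
    ∀ z : ℂ, ‖z‖ < 1 → ∀ θ θ' : ℝ, θ < θ' → θ' ≤ θ + 2 * Real.pi →
      ∫ t in (η θ)..(η θ'), poisson (M z) t = ∫ t in θ..θ', poisson z t := by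
  intro z hz θ θ' _ _
  obtain rfl : M = diskAutomorphism β a := funext fun x => by
    rw [hM, diskAutomorphism, blaschkeFactor, mul_div_assoc]
  have hMz := norm_diskAutomorphism_lt_one β ha hz
  have ha' : ‖conj a‖ < 1 := by rwa [norm_conj]
  have hexp : ∀ t, cexp (blaschkeArg (diskAutomorphism β a z) (η t) * I)
      = cexp (β * I) * conj (1 - conj a * z) / (1 - conj a * z) * cexp (blaschkeArg z t * I) := by
    intro t
    have he := (norm_exp_ofReal_mul_I t).le
    rw [cexp_blaschkeArg_mul_I hMz, hlift, cexp_blaschkeArg_mul_I hz,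
      blaschkeFactor_diskAutomorphism β (one_sub_mul_ne_zero ha' hz.le)
        (one_sub_mul_ne_zero ha' he) (one_sub_mul_ne_zero (by rwa [norm_conj]) he)
        (one_sub_mul_ne_zero ha' ha.le)]
  have hG := sub_eq_sub_of_cexp_mul_I_eq_mul ((continuous_blaschkeArg hMz).comp hη)
    (continuous_blaschkeArg hz) hexp θ' θ
  rw [integral_poisson hz, integral_poisson hMz]
  simp only [Function.comp_apply] at hG
  congr 1
  linarith
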